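/- Let n ≥ 1 and let 1 ≤ i < j < k < l ≤ n be top positions. Suppose μ and μ' are Brauer diagrams of size n that agree on every edge not incident to any of T_i, T_j, T_k, T_l, and that μ contains the nested cups {T_i,T_l} and {T_j,T_k}, while μ' contains the crossing cups {T_i,T_k} and {T_j,T_l}. Then χ(μ) ≡ χ(μ') + 1 (mod 2), i.e. (−1)^{χ(μ)} = −(−1)^{χ(μ')}. -/

import Mathlib

open Finset

/-- Vertices of a Brauer diagram of size `n`: `Sum.inl i` is the top point `T i`
and `Sum.inr m` is the bottom point `B m` (positions indexed left to right by `Fin n`). -/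
abbrev BVertex (n : ℕ) := Fin n ⊕ Fin n

/-- A Brauer diagram of size `n` is a perfect matching of the `2n` vertices,
encoded as a fixed-point-free involution. -/
def BrauerDiagram (n : ℕ) :=
  {f : Equiv.Perm (BVertex n) // (∀ x, f (f x) = x) ∧ (∀ x, f x ≠ x)}

instance (n : ℕ) : Fintype (BrauerDiagram n) := Subtype.fintype _

/-- An edge of a Brauer diagram: a cup joins two top points, a cap joins two bottom
points, and an arc joins a top point and a bottom point. In `cup i j` and `cap i j`
we maintain `i < j`, and in `arc i m`, `i` is the top position and `m` the bottom one. -/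
inductive BEdge (n : ℕ)
  | cup : Fin n → Fin n → BEdge n
  | cap : Fin n → Fin n → BEdge n
  | arc : Fin n → Fin n → BEdge n
deriving DecidableEq

/-- The canonical edge with endpoints `x` and `y`. -/
def edgeOf {n : ℕ} : BVertex n → BVertex n → BEdge n
  | .inl i, .inl j => .cup (min i j) (max i j)
  | .inr i, .inr j => .cap (min i j) (max i j)
  | .inl i, .inr m => .arc i m
  | .inr m, .inl i => .arc i m

/-- Whether two edges of a Brauer diagram cross. -/
def crosses {n : ℕ} : BEdge n → BEdge n → Bool
  | .cup i j, .cup k l => decide ((i < k ∧ k < j ∧ j < l) ∨ (k < i ∧ i < l ∧ l < j))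
  | .cap i j, .cap k l => decide ((i < k ∧ k < j ∧ j < l) ∨ (k < i ∧ i < l ∧ l < j))
  | .cup _ _, .cap _ _ => false
  | .cap _ _, .cup _ _ => false
  | .cup i j, .arc k _ => decide (i < k ∧ k < j)
  | .arc k _, .cup i j => decide (i < k ∧ k < j)
  | .cap i j, .arc _ m => decide (i < m ∧ m < j)
  | .arc _ m, .cap i j => decide (i < m ∧ m < j)
  | .arc i m, .arc j m' => decide ((i < j ∧ m' < m) ∨ (j < i ∧ m < m'))

/-- The set of edges of a Brauer diagram. -/
def edges {n : ℕ} (μ : BrauerDiagram n) : Finset (BEdge n) :=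
  Finset.univ.image fun x => edgeOf x (μ.1 x)

/-- The crossing number of a Brauer diagram: the number of unordered pairs of
its edges that cross. -/
def crossingNumber {n : ℕ} (μ : BrauerDiagram n) : ℕ :=
  ((edges μ).offDiag.filter fun p => crosses p.1 p.2 = true).card / 2

/-!
Count crossings over ordered pairs of distinct edges, so that `χ` is half that count. The two
diagrams share the set `E` of edges through the vertices other than `T_i, T_j, T_k, T_l`, hence
`χ(μ)` and `χ(μ')` differ only through the crossing of the two special cups with each other
(none for the nested pair, one for the crossing pair) and their crossings with `E`. A cup
`{T_a, T_b}` crosses an edge disjoint from it iff an odd number of the edge's top endpoints lie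
strictly between `a` and `b`; and for every top position the number of the intervals `(i, l)`,
`(j, k)` containing it has the same parity as the number of `(i, k)`, `(j, l)` containing it.
So the crossings with `E` agree mod 2 and `χ(μ) ≡ χ(μ') + 1`.
-/

section

variable {n : ℕ}

lemma crosses_comm (e f : BEdge n) : crosses e f = crosses f e := by
  cases e <;> cases f <;> simp only [crosses, decide_eq_decide] <;> tauto

lemma edgeOf_comm (x y : BVertex n) : edgeOf x y = edgeOf y x := by
  rcases x with a | a <;> rcases y with b | b <;> simp only [edgeOf, min_comm, max_comm]

lemma edgeOf_inl_inl_of_lt {a b : Fin n} (h : a < b) : edgeOf (.inl a) (.inl b) = .cup a b := by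
  simp [edgeOf, h.le]

lemma edgeOf_ne_cup {x y : BVertex n} {a : Fin n} (hx : x ≠ .inl a) (hy : y ≠ .inl a)
    (b : Fin n) : edgeOf x y ≠ .cup a b := by
  rcases x with p | p <;> rcases y with q | q <;> simp only [edgeOf, ne_eq, reduceCtorEq,
    not_false_eq_true, BEdge.cup.injEq, not_and] at hx hy ⊢
  rintro rfl -
  rcases min_choice p q with h | h <;> simp_all

def crossIndicator (e f : BEdge n) : ℕ := if e ≠ f ∧ crosses e f then 1 else 0

lemma crossIndicator_comm (e f : BEdge n) : crossIndicator e f = crossIndicator f e := by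
  simp only [crossIndicator, crosses_comm e f, ne_comm]

lemma crossIndicator_nested_cups {i j k l : Fin n} (hij : i < j) (hkl : k < l) :
    crossIndicator (.cup i l) (.cup j k) = 0 := by
  simp only [crossIndicator, crosses, decide_eq_true_eq, ite_eq_right_iff]
  omega

lemma crossIndicator_crossing_cups {i j k l : Fin n} (hij : i < j) (hjk : j < k) (hkl : k < l) :
    crossIndicator (.cup i k) (.cup j l) = 1 := by
  simp only [crossIndicator, crosses, decide_eq_true_eq, ne_eq, BEdge.cup.injEq, hij.ne, false_and,
    not_false_eq_true, true_and, ite_eq_left_iff]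
  omega

def topBetween (a b : Fin n) : BVertex n → ZMod 2
  | .inl c => if a < c ∧ c < b then 1 else 0
  | .inr _ => 0

lemma crossIndicator_cup_edgeOf {a b : Fin n} (hab : a < b) {x y : BVertex n}
    (hxa : x ≠ .inl a) (hxb : x ≠ .inl b) (hya : y ≠ .inl a) (hyb : y ≠ .inl b) :
    (crossIndicator (.cup a b) (edgeOf x y) : ZMod 2) = topBetween a b x + topBetween a b y := by
  have hne : BEdge.cup a b ≠ edgeOf x y := (edgeOf_ne_cup hxa hya b).symm
  simp only [crossIndicator, ne_eq, hne, not_false_eq_true, true_and]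
  rcases x with p | p <;> rcases y with q | q <;>
    simp only [edgeOf, crosses, topBetween, decide_eq_true_eq, ne_eq, Sum.inl.injEq, Fin.lt_def,
      Fin.coe_min, Fin.coe_max, Fin.ext_iff, Bool.false_eq_true, reduceIte, reduceCtorEq,
      Nat.cast_zero, add_zero] at hxa hxb hya hyb ⊢ <;>
    split_ifs <;> first | rfl | decide | omega

lemma topBetween_nested_eq_crossing {i j k l : Fin n} (hij : i < j) (hjk : j < k) (hkl : k < l)
    (x : BVertex n) :
    topBetween i l x + topBetween j k x = topBetween i k x + topBetween j l x := by
  rcases x with c | c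
  · simp only [topBetween]
    split_ifs <;> first | rfl | decide | omega
  · rfl

def orderedCrossings (s : Finset (BEdge n)) : ℕ := ∑ e ∈ s, ∑ f ∈ s, crossIndicator e f

lemma crossingNumber_eq_orderedCrossings_div_two (μ : BrauerDiagram n) :
    crossingNumber μ = orderedCrossings (edges μ) / 2 := by
  have hoff : (edges μ).offDiag = (edges μ ×ˢ edges μ).filter fun p => p.1 ≠ p.2 := by
    ext; simp [and_assoc]
  rw [crossingNumber, orderedCrossings, card_filter, hoff, sum_filter, sum_product]
  refine congrArg (· / 2) (sum_congr rfl fun e _ => sum_congr rfl fun f _ => ?_)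
  simp only [crossIndicator, ite_and]

lemma orderedCrossings_insert {a : BEdge n} {s : Finset (BEdge n)} (ha : a ∉ s) :
    orderedCrossings (insert a s) = orderedCrossings s + 2 * ∑ f ∈ s, crossIndicator a f := by
  have hself : crossIndicator a a = 0 := by simp [crossIndicator]
  simp only [orderedCrossings, sum_insert ha, hself, sum_add_distrib, crossIndicator_comm _ a]
  ring

lemma even_orderedCrossings (s : Finset (BEdge n)) : Even (orderedCrossings s) := by
  induction s using Finset.induction_on with
  | empty => simp [orderedCrossings]
  | insert a s ha ih => exact orderedCrossings_insert ha ▸ ih.add (even_two_mul _)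

lemma crossingNumber_eq_of_edges_eq_insert_insert {μ : BrauerDiagram n} {a b : BEdge n}
    {s : Finset (BEdge n)} (hab : a ≠ b) (ha : a ∉ s) (hb : b ∉ s)
    (h : edges μ = insert a (insert b s)) :
    crossingNumber μ = orderedCrossings s / 2 + crossIndicator a b +
      ∑ e ∈ s, (crossIndicator a e + crossIndicator b e) := by
  obtain ⟨t, ht⟩ := even_orderedCrossings s
  rw [crossingNumber_eq_orderedCrossings_div_two, h,
    orderedCrossings_insert (by simp [hab, ha]), orderedCrossings_insert hb, sum_insert hb,
    sum_add_distrib]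
  omega

def edgesOn (μ : BrauerDiagram n) (s : Finset (BVertex n)) : Finset (BEdge n) :=
  s.image fun x => edgeOf x (μ.1 x)

lemma edgesOn_insert_insert_apply (μ : BrauerDiagram n) (x : BVertex n) (s : Finset (BVertex n)) :
    edgesOn μ (insert x (insert (μ.1 x) s)) = insert (edgeOf x (μ.1 x)) (edgesOn μ s) := by
  simp only [edgesOn, image_insert, μ.2.1 x, edgeOf_comm (μ.1 x) x, insert_idem]

lemma edges_eq_insert_cup_insert_cup {μ : BrauerDiagram n} {a b c d : Fin n} (hab : a < b)
    (hcd : c < d) (h₁ : μ.1 (.inl a) = .inl b) (h₂ : μ.1 (.inl c) = .inl d)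
    {q : Finset (BVertex n)} (hq : q = {.inl a, .inl b, .inl c, .inl d}) :
    edges μ = insert (.cup a b) (insert (.cup c d) (edgesOn μ (univ \ q))) := by
  have hcover : (univ : Finset (BVertex n)) = insert (.inl a) (insert (μ.1 (.inl a))
      (insert (.inl c) (insert (μ.1 (.inl c)) (univ \ q)))) := by
    ext x
    by_cases x ∈ q <;> simp_all
  change edgesOn μ univ = _
  conv_lhs => rw [hcover]
  rw [edgesOn_insert_insert_apply, edgesOn_insert_insert_apply, h₁, h₂,
    edgeOf_inl_inl_of_lt hab, edgeOf_inl_inl_of_lt hcd]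

lemma BrauerDiagram.apply_eq_comm (μ : BrauerDiagram n) {x y : BVertex n} :
    μ.1 x = y ↔ μ.1 y = x :=
  ⟨fun h => h ▸ μ.2.1 x, fun h => h ▸ μ.2.1 y⟩

lemma exists_edgeOf_of_mem_edgesOn_compl {μ : BrauerDiagram n} {q : Finset (BVertex n)}
    (hq : ∀ y ∈ q, μ.1 y ∈ q) {e : BEdge n} (he : e ∈ edgesOn μ (univ \ q)) :
    ∃ x y, x ∉ q ∧ y ∉ q ∧ edgeOf x y = e := by
  obtain ⟨x, hx, rfl⟩ := mem_image.mp he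
  have hx : x ∉ q := (mem_sdiff.mp hx).2
  exact ⟨x, μ.1 x, hx, fun h => hx (μ.2.1 x ▸ hq _ h), rfl⟩

lemma cup_notMem_of_forall_edgeOf {q : Finset (BVertex n)} {s : Finset (BEdge n)}
    (hs : ∀ e ∈ s, ∃ x y, x ∉ q ∧ y ∉ q ∧ edgeOf x y = e) {a : Fin n}
    (ha : .inl a ∈ q) (b : Fin n) : .cup a b ∉ s := fun h => by
  obtain ⟨x, y, hx, hy, hxy⟩ := hs _ h
  exact edgeOf_ne_cup (ne_of_mem_of_not_mem ha hx).symm (ne_of_mem_of_not_mem ha hy).symm b hxy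

lemma sum_crossIndicator_nested_eq_crossing {i j k l : Fin n} (hij : i < j) (hjk : j < k)
    (hkl : k < l) {s : Finset (BEdge n)}
    (hs : ∀ e ∈ s, ∃ x y, x ∉ ({.inl i, .inl j, .inl k, .inl l} : Finset (BVertex n)) ∧
      y ∉ ({.inl i, .inl j, .inl k, .inl l} : Finset (BVertex n)) ∧ edgeOf x y = e) :
    ((∑ e ∈ s, (crossIndicator (.cup i l) e + crossIndicator (.cup j k) e) : ℕ) : ZMod 2) =
      ∑ e ∈ s, (crossIndicator (.cup i k) e + crossIndicator (.cup j l) e) := by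
  push_cast
  refine sum_congr rfl fun e he => ?_
  obtain ⟨x, y, hx, hy, rfl⟩ := hs e he
  simp only [mem_insert, mem_singleton, not_or] at hx hy
  obtain ⟨hxi, hxj, hxk, hxl⟩ := hx
  obtain ⟨hyi, hyj, hyk, hyl⟩ := hy
  rw [crossIndicator_cup_edgeOf (hij.trans (hjk.trans hkl)) hxi hxl hyi hyl,
    crossIndicator_cup_edgeOf hjk hxj hxk hyj hyk,
    crossIndicator_cup_edgeOf (hij.trans hjk) hxi hxk hyi hyk,
    crossIndicator_cup_edgeOf (hjk.trans hkl) hxj hxl hyj hyl]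
  linear_combination
    topBetween_nested_eq_crossing hij hjk hkl x + topBetween_nested_eq_crossing hij hjk hkl y

lemma neg_one_pow_eq_neg_of_cast_eq_add_one {a b : ℕ} (h : (a : ZMod 2) = b + 1) :
    (-1 : ℤ) ^ a = -(-1) ^ b := by
  rw [← Nat.cast_succ, ZMod.natCast_eq_natCast_iff'] at h
  rw [neg_one_pow_eq_pow_mod_two, h, ← neg_one_pow_eq_pow_mod_two, pow_succ, mul_neg_one]

end

theorem nested_to_crossing_cups_parity_general (n : ℕ) (i j k l : Fin n)
    (hij : i < j) (hjk : j < k) (hkl : k < l) (μ μ' : BrauerDiagram n)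
    (hcup1 : μ.1 (Sum.inl i) = Sum.inl l)
    (hcup2 : μ.1 (Sum.inl j) = Sum.inl k)
    (hcup1' : μ'.1 (Sum.inl i) = Sum.inl k)
    (hcup2' : μ'.1 (Sum.inl j) = Sum.inl l)
    (hagree : ∀ x : BVertex n, x ≠ Sum.inl i → x ≠ Sum.inl j →
      x ≠ Sum.inl k → x ≠ Sum.inl l → μ.1 x = μ'.1 x) :
    (-1 : ℤ) ^ crossingNumber μ = -(-1 : ℤ) ^ crossingNumber μ' := by
  set q : Finset (BVertex n) := {.inl i, .inl j, .inl k, .inl l}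
  have hμ := edges_eq_insert_cup_insert_cup (hij.trans (hjk.trans hkl)) hjk hcup1 hcup2
    (q := q) (by ext; simp [q]; tauto)
  have hμ' := edges_eq_insert_cup_insert_cup (hij.trans hjk) (hjk.trans hkl) hcup1' hcup2'
    (q := q) (by ext; simp [q]; tauto)
  set s := edgesOn μ (univ \ q)
  have hs' : edgesOn μ' (univ \ q) = s := image_congr fun x hx => by
    obtain ⟨hi, hj, hk, hl⟩ : x ≠ .inl i ∧ x ≠ .inl j ∧ x ≠ .inl k ∧ x ≠ .inl l := by
      simpa [q] using hx
    rw [hagree x hi hj hk hl]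
  have hs : ∀ e ∈ s, ∃ x y, x ∉ q ∧ y ∉ q ∧ edgeOf x y = e := fun e he =>
    exists_edgeOf_of_mem_edgesOn_compl (by
      simp [q, hcup1, hcup2, μ.apply_eq_comm.mp hcup1, μ.apply_eq_comm.mp hcup2]) he
  have hsum := sum_crossIndicator_nested_eq_crossing hij hjk hkl hs
  rw [crossingNumber_eq_of_edges_eq_insert_insert (by simp [hij.ne])
      (cup_notMem_of_forall_edgeOf hs (by simp [q]) _)
      (cup_notMem_of_forall_edgeOf hs (by simp [q]) _) hμ,
    crossingNumber_eq_of_edges_eq_insert_insert (by simp [hij.ne])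
      (cup_notMem_of_forall_edgeOf hs (by simp [q]) _)
      (cup_notMem_of_forall_edgeOf hs (by simp [q]) _) (hs' ▸ hμ'),
    crossIndicator_nested_cups hij hkl, crossIndicator_crossing_cups hij hjk hkl]
  apply neg_one_pow_eq_neg_of_cast_eq_add_one
  push_cast [hsum]
  ring_nf
  reduce_mod_char

/-- Lemma (d): replacing the nested cups `{T_i,T_l}` and `{T_j,T_k}` by the crossing
cups `{T_i,T_k}` and `{T_j,T_l}` (where `i < j < k < l` are top positions), all other
edges remaining the same, changes the parity of the crossing number. -/
theorem nested_to_crossing_cups_parity (n : ℕ) (hn : 1 ≤ n) (i j k l : Fin n)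
    (hij : i < j) (hjk : j < k) (hkl : k < l) (μ μ' : BrauerDiagram n)
    (hcup1 : μ.1 (Sum.inl i) = Sum.inl l)
    (hcup2 : μ.1 (Sum.inl j) = Sum.inl k)
    (hcup1' : μ'.1 (Sum.inl i) = Sum.inl k)
    (hcup2' : μ'.1 (Sum.inl j) = Sum.inl l)
    (hagree : ∀ x : BVertex n, x ≠ Sum.inl i → x ≠ Sum.inl j →
      x ≠ Sum.inl k → x ≠ Sum.inl l → μ.1 x = μ'.1 x) :
    (-1 : ℤ) ^ crossingNumber μ = -(-1 : ℤ) ^ crossingNumber μ' :=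
  nested_to_crossing_cups_parity_general n i j k l hij hjk hkl μ μ' hcup1 hcup2 hcup1' hcup2' hagree
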